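/- arXiv:1806.10222 — 2 statements merged into one kernel-verified Lean document; each statement's English description precedes it below -/
import Mathlib

section
/- Let t < d be positive integers and let U be a d×t real matrix with rows u_1, …, u_d ∈ ℝ^t satisfying Σ_{i=1}^d u_i u_iᵀ = I_t (i.e., UᵀU = I_t). Then for every integer r with t < r ≤ d there exist nonnegative reals s_1, …, s_d, at most r of which are nonzero, such that every eigenvalue λ of the symmetric positive semidefinite t×t matrix Σ_{i=1}^d s_i u_i u_iᵀ satisfies (1−√(t/r))² ≤ λ ≤ (1+√(t/r))². -/
/-!
Batson–Spielman–Srivastava barrier argument. Keep `A = ∑ sᵢ uᵢuᵢᵀ` strictly between barriers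
`l • 1 < A < u • 1` with potentials `tr (A - l)⁻¹ ≤ εL` and `tr (u - A)⁻¹ ≤ εU`. By
Sherman–Morrison, after adding `w uᵢuᵢᵀ` the barriers can move to `l + δL` and `u + δU` without
raising either potential as soon as `w U(uᵢ) ≤ 1 ≤ w L(uᵢ)` for two quadratic scores `U` and `L`.
Since `∑ uᵢuᵢᵀ = 1` the scores sum to traces, and `∑ U ≤ 1/δU + εU ≤ 1/δL - εL ≤ ∑ L` (the last
step is a trace Cauchy–Schwarz inequality) yields a good `i`. With `k = √(t/r)`, `δL = 1`,
`δU = (1+k)/(1-k)` and barriers starting at `-rk` and `rkδU`, after `r` steps the spectrum lies in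
`(r(1-k), r(1+k)²/(1-k))`; rescaling by `(1-k)/r` gives the claim.
-/

open Matrix

namespace Matrix

section CauchySchwarz

variable {m n : Type*} [Fintype m] [Fintype n]

theorem dotProduct_sq_le_dotProduct_self_mul (a b : n → ℝ) :
    (a ⬝ᵥ b) ^ 2 ≤ (a ⬝ᵥ a) * (b ⬝ᵥ b) := by
  simpa [dotProduct, sq] using Finset.sum_mul_sq_le_sq_mul_sq Finset.univ a b

theorem trace_transpose_mul_sq_le (A B : Matrix m n ℝ) :
    trace (Aᵀ * B) ^ 2 ≤ trace (Aᵀ * A) * trace (Bᵀ * B) := by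
  have hflat : ∀ P Q : Matrix m n ℝ, trace (Pᵀ * Q) = ∑ p : m × n, P p.1 p.2 * Q p.1 p.2 := by
    intro P Q
    rw [Fintype.sum_prod_type, Finset.sum_comm]
    simp [trace, mul_apply]
  simp only [hflat, ← sq]
  exact Finset.sum_mul_sq_le_sq_mul_sq _ _ _

theorem dotProduct_transpose_mul_mulVec (R : Matrix m n ℝ) (x y : n → ℝ) :
    x ⬝ᵥ (Rᵀ * R) *ᵥ y = (R *ᵥ x) ⬝ᵥ (R *ᵥ y) := by
  rw [← mulVec_mulVec, dotProduct_mulVec, vecMul_transpose]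

theorem posSemidef_vecMulVec_self (v : n → ℝ) : (vecMulVec v v).PosSemidef := by
  simpa using posSemidef_vecMulVec_self_star v

theorem PosSemidef.trace_mul_mul_self_nonneg {M X : Matrix n n ℝ} (hM : M.PosSemidef)
    (hX : X.IsHermitian) : 0 ≤ trace (M * X * X) := by
  have hXt : Xᵀ = X := by simpa using hX.eq
  rw [trace_mul_cycle]
  simpa [hXt] using (hM.mul_mul_conjTranspose_same X).trace_nonneg

variable [DecidableEq n]

namespace PosSemidef

theorem exists_eq_transpose_mul_self {M : Matrix n n ℝ} (hM : M.PosSemidef) :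
    ∃ R : Matrix n n ℝ, M = Rᵀ * R := by
  open scoped MatrixOrder in
  obtain ⟨R, hR⟩ := CStarAlgebra.nonneg_iff_eq_star_mul_self.mp hM.nonneg
  exact ⟨R, by rw [hR, star_eq_conjTranspose, conjTranspose_eq_transpose_of_trivial]⟩

theorem dotProduct_mulVec_sq_le {M : Matrix n n ℝ} (hM : M.PosSemidef) (x y : n → ℝ) :
    (x ⬝ᵥ M *ᵥ y) ^ 2 ≤ (x ⬝ᵥ M *ᵥ x) * (y ⬝ᵥ M *ᵥ y) := by
  obtain ⟨R, rfl⟩ := hM.exists_eq_transpose_mul_self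
  simp only [dotProduct_transpose_mul_mulVec]
  exact dotProduct_sq_le_dotProduct_self_mul _ _

theorem dotProduct_mulVec_le_trace_mul {M : Matrix n n ℝ} (hM : M.PosSemidef) (x : n → ℝ) :
    x ⬝ᵥ M *ᵥ x ≤ trace M * (x ⬝ᵥ x) := by
  obtain ⟨R, rfl⟩ := hM.exists_eq_transpose_mul_self
  have htrace : trace (Rᵀ * R) = ∑ i, R i ⬝ᵥ R i := by
    simp only [trace, diag, mul_apply, transpose_apply, dotProduct]
    exact Finset.sum_comm
  rw [dotProduct_transpose_mul_mulVec, htrace, Finset.sum_mul]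
  calc (R *ᵥ x) ⬝ᵥ (R *ᵥ x) = ∑ i, (R i ⬝ᵥ x) ^ 2 := by simp [dotProduct, mulVec, sq]
    _ ≤ ∑ i, (R i ⬝ᵥ R i) * (x ⬝ᵥ x) :=
      Finset.sum_le_sum fun i _ => dotProduct_sq_le_dotProduct_self_mul _ _

theorem trace_mul_sq_le {M X : Matrix n n ℝ} (hM : M.PosSemidef) (hX : X.IsHermitian) :
    trace (X * M) ^ 2 ≤ trace (M * X * X) * trace M := by
  obtain ⟨R, rfl⟩ := hM.exists_eq_transpose_mul_self
  have hXt : Xᵀ = X := by simpa using hX.eq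
  have h := trace_transpose_mul_sq_le (R * X) R
  have hcycle : trace (X * (Rᵀ * (R * X))) = trace (Rᵀ * R * X * X) := by
    rw [trace_mul_comm]; simp only [Matrix.mul_assoc]
  rwa [transpose_mul, hXt, Matrix.mul_assoc, Matrix.mul_assoc, hcycle] at h

end PosSemidef

end CauchySchwarz

theorem PosDef.add_smul_one {n : Type*} [DecidableEq n] {B : Matrix n n ℝ} (hB : B.PosDef)
    {δ : ℝ} (hδ : 0 ≤ δ) : (B + δ • 1).PosDef :=
  hB.add_posSemidef (PosSemidef.one.smul hδ)

variable {n : Type*} [Fintype n] [DecidableEq n]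

namespace PosDef

variable {B : Matrix n n ℝ}

theorem inv_mul_inv (hB : B.PosDef) : (B⁻¹ * B⁻¹).PosDef := by
  have hinj : Function.Injective B⁻¹.vecMul := by
    rw [vecMul_injective_iff_isUnit, isUnit_nonsing_inv_iff]
    exact hB.isUnit
  have hsymm : B⁻¹ᵀ = B⁻¹ := by simpa using hB.inv.isHermitian.eq
  simpa [hsymm] using PosDef.one.mul_mul_conjTranspose_same hinj

theorem dotProduct_sq_le (hB : B.PosDef) (v x : n → ℝ) :
    (v ⬝ᵥ x) ^ 2 ≤ (v ⬝ᵥ B⁻¹ *ᵥ v) * (x ⬝ᵥ B *ᵥ x) := by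
  have h := hB.inv.posSemidef.dotProduct_mulVec_sq_le v (B *ᵥ x)
  rwa [mulVec_mulVec, nonsing_inv_mul B (B.isUnit_iff_isUnit_det.mp hB.isUnit), one_mulVec,
    dotProduct_comm (B *ᵥ x)] at h

theorem sub_smul_vecMulVec (hB : B.PosDef) {w : ℝ} (hw : 0 ≤ w) {v : n → ℝ}
    (h : w * (v ⬝ᵥ B⁻¹ *ᵥ v) < 1) : (B - w • vecMulVec v v).PosDef := by
  refine .of_dotProduct_mulVec_pos
    (hB.isHermitian.sub ((posSemidef_vecMulVec_self v).smul hw).isHermitian) fun x hx => ?_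
  have hBx : 0 < x ⬝ᵥ B *ᵥ x := by simpa using hB.dotProduct_mulVec_pos hx
  have hcs := hB.dotProduct_sq_le v x
  have hrank : x ⬝ᵥ vecMulVec v v *ᵥ x = (v ⬝ᵥ x) ^ 2 := by
    rw [vecMulVec_mulVec]; simp [dotProduct_comm, sq]
  rw [star_trivial, sub_mulVec, dotProduct_sub, smul_mulVec, dotProduct_smul, hrank, smul_eq_mul,
    sub_pos]
  nlinarith [mul_le_mul_of_nonneg_left hcs hw, mul_lt_mul_of_pos_right h hBx]

theorem sub_smul_one (hB : B.PosDef) {δ : ℝ} (hδ : 0 ≤ δ) (h : δ * trace B⁻¹ < 1) :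
    (B - δ • 1).PosDef := by
  refine .of_dotProduct_mulVec_pos
    (hB.isHermitian.sub (PosSemidef.one.smul hδ).isHermitian) fun x hx => ?_
  have hBx : 0 < x ⬝ᵥ B *ᵥ x := by simpa using hB.dotProduct_mulVec_pos hx
  have hxx : 0 < x ⬝ᵥ x := by simpa using dotProduct_star_self_pos_iff.mpr hx
  have hcs := hB.dotProduct_sq_le x x
  have htr := hB.inv.posSemidef.dotProduct_mulVec_le_trace_mul x
  rw [star_trivial, sub_mulVec, dotProduct_sub, smul_mulVec, one_mulVec, dotProduct_smul,
    smul_eq_mul, sub_pos]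
  have hxx_le : x ⬝ᵥ x ≤ trace B⁻¹ * (x ⬝ᵥ B *ᵥ x) := by
    refine le_of_mul_le_mul_left ?_ hxx
    nlinarith [mul_le_mul_of_nonneg_right htr hBx.le]
  nlinarith [mul_le_mul_of_nonneg_left hxx_le hδ, mul_lt_mul_of_pos_right h hBx]

end PosDef

theorem inv_add_vecMulVec {K : Type*} [Field K] {B : Matrix n n K} (hB : IsUnit B) (u v : n → K)
    (h : 1 + v ⬝ᵥ B⁻¹ *ᵥ u ≠ 0) :
    (B + vecMulVec u v)⁻¹ = B⁻¹ - (1 + v ⬝ᵥ B⁻¹ *ᵥ u)⁻¹ • (B⁻¹ * vecMulVec u v * B⁻¹) := by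
  set q := v ⬝ᵥ B⁻¹ *ᵥ u
  have hBB : B * B⁻¹ = 1 := mul_nonsing_inv B (B.isUnit_iff_isUnit_det.mp hB)
  have hsq : vecMulVec u v * (B⁻¹ * vecMulVec u v) = q • vecMulVec u v := by
    rw [mul_vecMulVec, vecMulVec_mul_vecMulVec, vecMulVec_smul]
  apply inv_eq_right_inv
  calc (B + vecMulVec u v) * (B⁻¹ - (1 + q)⁻¹ • (B⁻¹ * vecMulVec u v * B⁻¹))
      = 1 + (1 - (1 + q)⁻¹ * (1 + q)) • (vecMulVec u v * B⁻¹) := by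
        simp only [Matrix.add_mul, Matrix.mul_sub, Matrix.mul_smul, ← Matrix.mul_assoc, hBB,
          Matrix.one_mul]
        rw [Matrix.mul_assoc (vecMulVec u v), hsq, Matrix.smul_mul]
        module
    _ = 1 := by rw [inv_mul_cancel₀ h, sub_self, zero_smul, add_zero]

theorem trace_inv_add_smul_vecMulVec {B : Matrix n n ℝ} (hB : IsUnit B) (a : ℝ) (x : n → ℝ)
    (h : 1 + a * (x ⬝ᵥ B⁻¹ *ᵥ x) ≠ 0) :
    trace (B + a • vecMulVec x x)⁻¹ =
      trace B⁻¹ - a * (x ⬝ᵥ (B⁻¹ * B⁻¹) *ᵥ x) / (1 + a * (x ⬝ᵥ B⁻¹ *ᵥ x)) := by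
  rw [← smul_vecMulVec, inv_add_vecMulVec hB _ _ (by rwa [mulVec_smul, dotProduct_smul]),
    trace_sub, trace_smul, trace_mul_cycle, mul_vecMulVec, trace_vecMulVec]
  simp only [mulVec_smul, dotProduct_smul, smul_eq_mul, dotProduct_comm _ x]
  ring

theorem trace_inv_smul_one {c : ℝ} (hc : c ≠ 0) :
    trace ((c • 1 : Matrix n n ℝ)⁻¹) = Fintype.card n / c := by
  rw [inv_eq_right_inv (B := c⁻¹ • 1) (by rw [smul_mul_smul, mul_inv_cancel₀ hc, Matrix.mul_one,
    one_smul]), trace_smul, trace_one, smul_eq_mul, inv_mul_eq_div]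

section Resolvent

variable {B : Matrix n n ℝ} {δ : ℝ}

theorem PosDef.inv_sub_inv_add_smul_one (hB : B.PosDef) (hδ : 0 ≤ δ) :
    B⁻¹ - (B + δ • 1)⁻¹ = δ • (B⁻¹ * (B + δ • 1)⁻¹) := by
  rw [inv_sub_inv (by simp [hB.isUnit, (hB.add_smul_one hδ).isUnit]), add_sub_cancel_left,
    Matrix.mul_smul, Matrix.mul_one, Matrix.smul_mul]

theorem PosDef.trace_inv_sub_trace_inv_add_smul_one (hB : B.PosDef) (hδ : 0 ≤ δ) :
    trace B⁻¹ - trace (B + δ • 1)⁻¹ = δ * trace (B⁻¹ * (B + δ • 1)⁻¹) := by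
  rw [← trace_sub, hB.inv_sub_inv_add_smul_one hδ, trace_smul, smul_eq_mul]

theorem PosDef.mul_trace_inv_add_smul_one_sq_le (hB : B.PosDef) (hδ : 0 ≤ δ) :
    δ * trace ((B + δ • 1)⁻¹ * (B + δ • 1)⁻¹) ≤ trace B⁻¹ - trace (B + δ • 1)⁻¹ := by
  have hdiff : B⁻¹ * (B + δ • 1)⁻¹ - (B + δ • 1)⁻¹ * (B + δ • 1)⁻¹ =
      δ • (B⁻¹ * (B + δ • 1)⁻¹ * (B + δ • 1)⁻¹) := by
    rw [← Matrix.sub_mul, hB.inv_sub_inv_add_smul_one hδ, Matrix.smul_mul]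
  have hT := hB.inv.posSemidef.trace_mul_mul_self_nonneg (hB.add_smul_one hδ).inv.isHermitian
  have htr := congrArg trace hdiff
  rw [trace_sub, trace_smul, smul_eq_mul] at htr
  rw [hB.trace_inv_sub_trace_inv_add_smul_one hδ]
  nlinarith [mul_nonneg hδ (mul_nonneg hδ hT)]

theorem PosDef.trace_inv_add_smul_one_le (hB : B.PosDef) (hδ : 0 ≤ δ) :
    trace (B + δ • 1)⁻¹ ≤ trace B⁻¹ := by
  have hsq := (hB.add_smul_one hδ).inv_mul_inv.posSemidef.trace_nonneg
  linarith [hB.mul_trace_inv_add_smul_one_sq_le hδ, mul_nonneg hδ hsq]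

theorem PosDef.trace_inv_add_smul_one_lt [Nonempty n] (hB : B.PosDef) (hδ : 0 < δ) :
    trace (B + δ • 1)⁻¹ < trace B⁻¹ := by
  have hsq := (hB.add_smul_one hδ.le).inv_mul_inv.trace_pos
  linarith [hB.mul_trace_inv_add_smul_one_sq_le hδ.le, mul_pos hδ hsq]

end Resolvent

theorem sum_dotProduct_mulVec_eq_trace {ι : Type*} [Fintype ι] {U : Matrix ι n ℝ}
    (hU : Uᵀ * U = 1) (M : Matrix n n ℝ) : ∑ i, U i ⬝ᵥ M *ᵥ U i = trace M := by
  have hdiag : ∑ i, U i ⬝ᵥ M *ᵥ U i = trace (U * M * Uᵀ) := by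
    refine Finset.sum_congr rfl fun i _ => ?_
    rw [diag_apply, mul_apply, dotProduct_mulVec]
    simp [vecMul, dotProduct, mul_apply, mul_comm]
  rw [hdiag, trace_mul_cycle, hU, Matrix.one_mul]

noncomputable section Scores

/-- With `B = u • 1 - A` this is the score `U_A(x)` of Batson–Spielman–Srivastava. -/
def upperScore (B : Matrix n n ℝ) (δ : ℝ) (x : n → ℝ) : ℝ :=
  x ⬝ᵥ ((B + δ • 1)⁻¹ * (B + δ • 1)⁻¹) *ᵥ x / (trace B⁻¹ - trace (B + δ • 1)⁻¹) +
    x ⬝ᵥ (B + δ • 1)⁻¹ *ᵥ x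

/-- With `C = A - l • 1` this is the score `L_A(x)` of Batson–Spielman–Srivastava. -/
def lowerScore (C : Matrix n n ℝ) (δ : ℝ) (x : n → ℝ) : ℝ :=
  x ⬝ᵥ ((C - δ • 1)⁻¹ * (C - δ • 1)⁻¹) *ᵥ x / (trace (C - δ • 1)⁻¹ - trace C⁻¹) -
    x ⬝ᵥ (C - δ • 1)⁻¹ *ᵥ x

variable {ι : Type*} [Fintype ι] {U : Matrix ι n ℝ} {B C : Matrix n n ℝ} {δ w : ℝ} {x : n → ℝ}

theorem upperScore_nonneg (hB : B.PosDef) (hδ : 0 ≤ δ) (x : n → ℝ) : 0 ≤ upperScore B δ x := by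
  have hB' := hB.add_smul_one hδ
  have hP : 0 ≤ x ⬝ᵥ ((B + δ • 1)⁻¹ * (B + δ • 1)⁻¹) *ᵥ x := by
    simpa using hB'.inv_mul_inv.posSemidef.dotProduct_mulVec_nonneg x
  have hp : 0 ≤ x ⬝ᵥ (B + δ • 1)⁻¹ *ᵥ x := by
    simpa using hB'.inv.posSemidef.dotProduct_mulVec_nonneg x
  have hD := sub_nonneg.mpr (hB.trace_inv_add_smul_one_le hδ)
  unfold upperScore
  positivity

theorem sum_upperScore_le (hU : Uᵀ * U = 1) (hB : B.PosDef) (hδ : 0 < δ) :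
    ∑ i, upperScore B δ (U i) ≤ 1 / δ + trace B⁻¹ := by
  have hest := hB.mul_trace_inv_add_smul_one_sq_le hδ.le
  have hmono := hB.trace_inv_add_smul_one_le hδ.le
  simp only [upperScore, Finset.sum_add_distrib, ← Finset.sum_div,
    sum_dotProduct_mulVec_eq_trace hU]
  suffices trace ((B + δ • 1)⁻¹ * (B + δ • 1)⁻¹) / (trace B⁻¹ - trace (B + δ • 1)⁻¹) ≤ 1 / δ by
    linarith
  rcases (sub_nonneg.mpr hmono).eq_or_lt with hD | hD
  · rw [← hD, div_zero]; positivity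
  · rw [div_le_div_iff₀ hD hδ]; linarith

theorem le_sum_lowerScore [Nonempty n] (hU : Uᵀ * U = 1) (hC : (C - δ • 1).PosDef) (hδ : 0 < δ)
    (h : δ * trace C⁻¹ ≤ 1) : 1 / δ - trace C⁻¹ ≤ ∑ i, lowerScore C δ (U i) := by
  simp only [lowerScore, Finset.sum_sub_distrib, ← Finset.sum_div,
    sum_dotProduct_mulVec_eq_trace hU]
  set C' := C - δ • 1
  have hCC' : C = C' + δ • 1 := (sub_add_cancel C _).symm
  rw [hCC'] at h ⊢
  set S := trace (C'⁻¹ * (C' + δ • 1)⁻¹)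
  set T := trace ((C' + δ • 1)⁻¹ * C'⁻¹ * C'⁻¹)
  have hgap := hC.trace_inv_sub_trace_inv_add_smul_one hδ.le
  have hS : 0 < S := by
    have := hC.trace_inv_add_smul_one_lt hδ
    nlinarith
  have hsq : trace (C'⁻¹ * C'⁻¹) = S + δ * T := by
    have hdiff : C'⁻¹ * C'⁻¹ - C'⁻¹ * (C' + δ • 1)⁻¹ = δ • (C'⁻¹ * C'⁻¹ * (C' + δ • 1)⁻¹) := by
      rw [← Matrix.mul_sub, hC.inv_sub_inv_add_smul_one hδ.le, Matrix.mul_smul, Matrix.mul_assoc]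
    have htr := congrArg trace hdiff
    rw [trace_sub, trace_smul, smul_eq_mul, trace_mul_cycle] at htr
    linarith
  have hT : 0 ≤ T :=
    (hC.add_smul_one hδ.le).inv.posSemidef.trace_mul_mul_self_nonneg hC.inv.isHermitian
  have hcs : S ^ 2 ≤ T * trace (C' + δ • 1)⁻¹ :=
    (hC.add_smul_one hδ.le).inv.posSemidef.trace_mul_sq_le hC.inv.isHermitian
  rw [hgap, hsq]
  have hTS : δ * S ≤ T / S := by
    rw [le_div_iff₀ hS]
    nlinarith [mul_le_mul_of_nonneg_right h hT]
  have : (S + δ * T) / (δ * S) = 1 / δ + T / S := by field_simp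
  rw [this]
  linarith

theorem PosDef.upper_barrier_shift (hB : B.PosDef) (hδ : 0 < δ) (hx : x ≠ 0) (hw : 0 < w)
    (h : w * upperScore B δ x ≤ 1) :
    (B + δ • 1 - w • vecMulVec x x).PosDef ∧
      trace (B + δ • 1 - w • vecMulVec x x)⁻¹ ≤ trace B⁻¹ := by
  obtain ⟨i, -⟩ := Function.ne_iff.mp hx
  have : Nonempty n := ⟨i⟩
  have hB' := hB.add_smul_one hδ.le
  have hD := sub_pos.mpr (hB.trace_inv_add_smul_one_lt hδ)
  have hP : 0 < x ⬝ᵥ ((B + δ • 1)⁻¹ * (B + δ • 1)⁻¹) *ᵥ x := by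
    simpa using hB'.inv_mul_inv.dotProduct_mulVec_pos hx
  have hp : 0 ≤ x ⬝ᵥ (B + δ • 1)⁻¹ *ᵥ x := by
    simpa using hB'.inv.posSemidef.dotProduct_mulVec_nonneg x
  unfold upperScore at h
  set D := trace B⁻¹ - trace (B + δ • 1)⁻¹
  set P := x ⬝ᵥ ((B + δ • 1)⁻¹ * (B + δ • 1)⁻¹) *ᵥ x
  set p := x ⬝ᵥ (B + δ • 1)⁻¹ *ᵥ x
  have hwP : w * P ≤ D * (1 - w * p) := by
    have : w * (P / D) ≤ 1 - w * p := by linarith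
    rwa [mul_div_assoc', div_le_iff₀ hD, mul_comm (1 - _)] at this
  have hwp : w * p < 1 := by nlinarith [mul_pos hw hP]
  refine ⟨hB'.sub_smul_vecMulVec hw.le hwp, ?_⟩
  rw [sub_eq_add_neg, ← neg_smul, trace_inv_add_smul_vecMulVec hB'.isUnit _ _ (by linarith)]
  have hdiv : w * P / (1 - w * p) ≤ D := by rwa [div_le_iff₀ (by linarith)]
  have : -w * P / (1 + -w * p) = -(w * P / (1 - w * p)) := by ring
  linarith

theorem PosDef.lower_barrier_shift [Nonempty n] (hC : (C - δ • 1).PosDef) (hδ : 0 < δ)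
    (hw : 0 ≤ w) (h : 1 ≤ w * lowerScore C δ x) :
    trace (C - δ • 1 + w • vecMulVec x x)⁻¹ ≤ trace C⁻¹ := by
  have hD := sub_pos.mpr (hC.trace_inv_add_smul_one_lt hδ)
  rw [sub_add_cancel] at hD
  have hq : 0 ≤ x ⬝ᵥ (C - δ • 1)⁻¹ *ᵥ x := by
    simpa using hC.inv.posSemidef.dotProduct_mulVec_nonneg x
  unfold lowerScore at h
  set D := trace (C - δ • 1)⁻¹ - trace C⁻¹
  set Q := x ⬝ᵥ ((C - δ • 1)⁻¹ * (C - δ • 1)⁻¹) *ᵥ x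
  set q := x ⬝ᵥ (C - δ • 1)⁻¹ *ᵥ x
  have h1wq : 0 < 1 + w * q := by positivity
  rw [trace_inv_add_smul_vecMulVec hC.isUnit _ _ h1wq.ne']
  have hDQ : D * (1 + w * q) ≤ w * Q := by
    have : 1 + w * q ≤ w * Q / D := by rw [mul_sub, mul_div_assoc'] at h; linarith
    rwa [le_div_iff₀ hD, mul_comm] at this
  have : D ≤ w * Q / (1 + w * q) := by rwa [le_div_iff₀ h1wq]
  linarith

end Scores

end Matrix

theorem Finset.exists_le_and_pos_of_sum_le {ι : Type*} [Fintype ι] {f g : ι → ℝ}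
    (hf : ∀ i, 0 ≤ f i) (hle : ∑ i, f i ≤ ∑ i, g i) (hpos : 0 < ∑ i, g i) :
    ∃ i, f i ≤ g i ∧ 0 < g i := by
  by_contra! h
  have hgf : ∀ i, g i ≤ f i := fun i => by
    by_cases hi : f i ≤ g i
    · exact (h i hi).trans (hf i)
    · exact (not_le.mp hi).le
  obtain ⟨i, -, hi⟩ :=
    Finset.exists_lt_of_sum_lt (by simpa using hpos : ∑ _i : ι, (0 : ℝ) < ∑ i, g i)
  have hlt : ∑ i, g i < ∑ i, f i := Finset.sum_lt_sum (fun j _ => hgf j)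
    ⟨i, Finset.mem_univ i, not_le.mp fun hfg => (h i hfg).not_gt hi⟩
  linarith

variable {n : Type*} [Fintype n] [DecidableEq n]

structure WithinBarriers (A : Matrix n n ℝ) (l u εL εU : ℝ) : Prop where
  posDef_lower : (A - l • 1).PosDef
  posDef_upper : (u • 1 - A).PosDef
  trace_lower_le : trace (A - l • 1)⁻¹ ≤ εL
  trace_upper_le : trace (u • 1 - A)⁻¹ ≤ εU

theorem withinBarriers_zero {l u : ℝ} (hl : l < 0) (hu : 0 < u) :
    WithinBarriers (0 : Matrix n n ℝ) l u (Fintype.card n / -l) (Fintype.card n / u) := by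
  rw [← neg_pos] at hl
  have hlower : (0 : Matrix n n ℝ) - l • 1 = (-l) • 1 := by rw [zero_sub, neg_smul]
  constructor <;> simp only [hlower, sub_zero]
  exacts [PosDef.one.smul hl, PosDef.one.smul hu, (trace_inv_smul_one hl.ne').le,
    (trace_inv_smul_one hu.ne').le]

theorem WithinBarriers.smul_eigenvalue_mem_Ioo {A : Matrix n n ℝ} {l u εL εU c lam : ℝ}
    {v : n → ℝ} (hA : WithinBarriers A l u εL εU) (hc : 0 < c) (hv : v ≠ 0)
    (hAv : (c • A) *ᵥ v = lam • v) : lam ∈ Set.Ioo (c * l) (c * u) := by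
  have hvv : 0 < v ⬝ᵥ v := by simpa using dotProduct_star_self_pos_iff.mpr hv
  have hquad : v ⬝ᵥ A *ᵥ v = lam / c * (v ⬝ᵥ v) := by
    rw [smul_mulVec] at hAv
    rw [div_eq_inv_mul, ← smul_eq_mul, ← dotProduct_smul, ← smul_smul, ← hAv, smul_smul,
      inv_mul_cancel₀ hc.ne', one_smul]
  have hl := hA.posDef_lower.dotProduct_mulVec_pos hv
  have hu := hA.posDef_upper.dotProduct_mulVec_pos hv
  simp only [star_trivial, sub_mulVec, smul_mulVec, one_mulVec, dotProduct_sub, dotProduct_smul,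
    smul_eq_mul, hquad] at hl hu
  have hl' : l < lam / c := by nlinarith
  have hu' : lam / c < u := by nlinarith
  exact ⟨(lt_div_iff₀' hc).mp hl', (div_lt_iff₀' hc).mp hu'⟩

section Step

variable [Nonempty n] {ι : Type*} [Fintype ι] {U : Matrix ι n ℝ} {l u εL εU δL δU : ℝ}

theorem WithinBarriers.exists_add_smul_vecMulVec (hU : Uᵀ * U = 1) {A : Matrix n n ℝ}
    (hA : WithinBarriers A l u εL εU) (hδL : 0 < δL) (hδU : 0 < δU) (hεL : δL * εL < 1)
    (hgap : 1 / δU + εU ≤ 1 / δL - εL) :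
    ∃ i, ∃ w : ℝ, 0 ≤ w ∧
      WithinBarriers (A + w • vecMulVec (U i) (U i)) (l + δL) (u + δU) εL εU := by
  have hδLtr : δL * trace (A - l • 1)⁻¹ < 1 :=
    (mul_le_mul_of_nonneg_left hA.trace_lower_le hδL.le).trans_lt hεL
  have hC' := hA.posDef_lower.sub_smul_one hδL.le hδLtr
  have hsumU : ∑ i, upperScore (u • 1 - A) δU (U i) ≤ 1 / δU + εU := by
    linarith [sum_upperScore_le hU hA.posDef_upper hδU, hA.trace_upper_le]
  have hsumL : 1 / δL - εL ≤ ∑ i, lowerScore (A - l • 1) δL (U i) := by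
    linarith [le_sum_lowerScore hU hC' hδL hδLtr.le, hA.trace_lower_le]
  have hLpos : 0 < 1 / δL - εL := by
    rw [div_sub' hδL.ne']; exact div_pos (by linarith) hδL
  obtain ⟨i, hle, hpos⟩ := Finset.exists_le_and_pos_of_sum_le
    (fun i => upperScore_nonneg hA.posDef_upper hδU.le (U i)) (hsumU.trans (hgap.trans hsumL))
    (hLpos.trans_le hsumL)
  set x := U i
  have hx : x ≠ 0 := by rintro hx; simp [hx, lowerScore] at hpos
  set w := (lowerScore (A - l • 1) δL x)⁻¹
  have hw : 0 < w := inv_pos.mpr hpos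
  have hwL : w * lowerScore (A - l • 1) δL x = 1 := inv_mul_cancel₀ hpos.ne'
  obtain ⟨hPDU, hTU⟩ := hA.posDef_upper.upper_barrier_shift hδU hx hw
    (by rw [← hwL]; exact mul_le_mul_of_nonneg_left hle hw.le)
  have hTL := hC'.lower_barrier_shift hδL hw.le hwL.ge
  have hupper : (u + δU) • 1 - (A + w • vecMulVec x x) =
      u • 1 - A + δU • 1 - w • vecMulVec x x := by module
  have hlower : A + w • vecMulVec x x - (l + δL) • 1 =
      A - l • 1 - δL • 1 + w • vecMulVec x x := by module
  refine ⟨i, w, hw.le, ?_, ?_, ?_, ?_⟩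
  · rw [hlower]; exact hC'.add_posSemidef ((posSemidef_vecMulVec_self x).smul hw.le)
  · rw [hupper]; exact hPDU
  · rw [hlower]; exact hTL.trans hA.trace_lower_le
  · rw [hupper]; exact hTU.trans hA.trace_upper_le

theorem WithinBarriers.exists_sum_smul_vecMulVec [DecidableEq ι] (hU : Uᵀ * U = 1)
    (h₀ : WithinBarriers (0 : Matrix n n ℝ) l u εL εU) (hδL : 0 < δL) (hδU : 0 < δU)
    (hεL : δL * εL < 1) (hgap : 1 / δU + εU ≤ 1 / δL - εL) (τ : ℕ) :
    ∃ s : ι → ℝ, (∀ i, 0 ≤ s i) ∧ (Finset.univ.filter (fun i => s i ≠ 0)).card ≤ τ ∧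
      WithinBarriers (∑ i, s i • vecMulVec (U i) (U i)) (l + τ * δL) (u + τ * δU) εL εU := by
  induction τ with
  | zero => exact ⟨0, fun _ => le_rfl, by simp, by simpa using h₀⟩
  | succ τ ih =>
    obtain ⟨s, hs, hcard, hA⟩ := ih
    obtain ⟨i, w, hw, hA'⟩ := hA.exists_add_smul_vecMulVec hU hδL hδU hεL hgap
    refine ⟨s + Pi.single i w, fun j => add_nonneg (hs j)
      ((show (0 : ι → ℝ) ≤ Pi.single i w from Pi.single_nonneg.mpr hw) j), ?_, ?_⟩
    · have hsupp : Finset.univ.filter (fun j => (s + Pi.single i w : ι → ℝ) j ≠ 0) ⊆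
          insert i (Finset.univ.filter (fun j => s j ≠ 0)) := by
        intro j hj
        by_cases hji : j = i
        · exact hji ▸ Finset.mem_insert_self j _
        · simpa [hji] using hj
      exact (Finset.card_le_card hsupp).trans ((Finset.card_insert_le _ _).trans (by omega))
    · have hsum : ∑ j, (s + Pi.single i w : ι → ℝ) j • vecMulVec (U j) (U j) =
          ∑ j, s j • vecMulVec (U j) (U j) + w • vecMulVec (U i) (U i) := by
        simp [add_smul, Finset.sum_add_distrib, Pi.single_apply]
      rw [hsum]
      convert hA' using 1 <;> push_cast <;> ring

end Step

theorem bss_weights_general (d t : ℕ) (ht : 0 < t)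
    (U : Matrix (Fin d) (Fin t) ℝ) (hU : Uᵀ * U = 1)
    (r : ℕ) (hr₁ : t < r) :
    ∃ s : Fin d → ℝ,
      (∀ i, 0 ≤ s i) ∧
      (Finset.univ.filter (fun i => s i ≠ 0)).card ≤ r ∧
      (∀ (lam : ℝ) (v : Fin t → ℝ), v ≠ 0 →
        (∑ i, s i • Matrix.vecMulVec (U i) (U i)).mulVec v = lam • v →
        (1 - Real.sqrt ((t : ℝ) / r)) ^ 2 ≤ lam ∧
          lam ≤ (1 + Real.sqrt ((t : ℝ) / r)) ^ 2) := by
  have : Nonempty (Fin t) := Fin.pos_iff_nonempty.mp ht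
  have hr : (0 : ℝ) < r := by exact_mod_cast ht.trans hr₁
  set k := Real.sqrt ((t : ℝ) / r)
  have htk : (t : ℝ) = r * k ^ 2 := by rw [Real.sq_sqrt (by positivity)]; field_simp
  have hk0 : 0 < k := Real.sqrt_pos.mpr (by positivity)
  have hk1 : 0 < 1 - k := by
    rw [sub_pos, Real.sqrt_lt' one_pos, one_pow, div_lt_one hr]; exact_mod_cast hr₁
  set δ := (1 + k) / (1 - k) with hδ_def
  have hδ : 0 < δ := by positivity
  have hc : 0 < (1 - k) / r := by positivity
  -- The potentials start at `t / (r k) = k` and `t / (r k δ)`; both sides of the gap are `1 - k`.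
  have hεL : 1 * (Fintype.card (Fin t) / -(-(r * k))) < 1 := by
    rw [Fintype.card_fin, htk, neg_neg, one_mul, div_lt_one (by positivity)]
    exact mul_lt_mul_of_pos_left (by nlinarith) hr
  have hgap : 1 / δ + Fintype.card (Fin t) / (r * k * δ) ≤
      1 / 1 - Fintype.card (Fin t) / -(-(r * k)) := by
    rw [Fintype.card_fin, htk, neg_neg, hδ_def]
    exact le_of_eq (by field_simp)
  obtain ⟨s, hs, hcard, hA⟩ := (withinBarriers_zero (n := Fin t) (l := -(r * k)) (u := r * k * δ)
    (neg_neg_of_pos (by positivity)) (by positivity)).exists_sum_smul_vecMulVec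
      hU one_pos hδ hεL hgap r
  refine ⟨fun i => (1 - k) / r * s i, fun i => mul_nonneg hc.le (hs i), ?_, fun lam v hv hAv => ?_⟩
  · simpa [hc.ne'] using hcard
  · have hlam := hA.smul_eigenvalue_mem_Ioo hc hv (by simpa [Finset.smul_sum, smul_smul] using hAv)
    have hlow : (1 - k) / r * (-(r * k) + r * 1) = (1 - k) ^ 2 := by field_simp; ring
    have hup : (1 - k) / r * (r * k * δ + r * δ) = (1 + k) ^ 2 := by
      rw [hδ_def]; field_simp; ring
    rw [hlow, hup] at hlam
    exact ⟨hlam.1.le, hlam.2.le⟩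

/-- BSS-weights sparsification lemma (Batson–Spielman–Srivastava, as formulated by
Boutsidis et al.): if `U` is a `d × t` real matrix with `Uᵀ U = I_t` and `t < r ≤ d`,
then there are nonnegative weights `s`, at most `r` of them nonzero, such that every
eigenvalue `lam` of `∑ i, s i • (u_i u_iᵀ)` satisfies
`(1 - √(t/r))² ≤ lam ≤ (1 + √(t/r))²`. -/
theorem bss_weights (d t : ℕ) (ht : 0 < t) (htd : t < d)
    (U : Matrix (Fin d) (Fin t) ℝ) (hU : Uᵀ * U = 1)
    (r : ℕ) (hr₁ : t < r) (hr₂ : r ≤ d) :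
    ∃ s : Fin d → ℝ,
      (∀ i, 0 ≤ s i) ∧
      (Finset.univ.filter (fun i => s i ≠ 0)).card ≤ r ∧
      (∀ (lam : ℝ) (v : Fin t → ℝ), v ≠ 0 →
        (∑ i, s i • Matrix.vecMulVec (U i) (U i)).mulVec v = lam • v →
        (1 - Real.sqrt ((t : ℝ) / r)) ^ 2 ≤ lam ∧
          lam ≤ (1 + Real.sqrt ((t : ℝ) / r)) ^ 2) :=
  bss_weights_general d t ht U hU r hr₁
end

section
/- Let p ≥ 1, γ ∈ (0,1), and let u_1, …, u_d ∈ ℝ^t each satisfy ‖u_i‖₂ ≤ 1. Let s_1, …, s_d ≥ 0 be weights with at most r₀ ≥ 1 nonzero entries, and define s'_i = s_i if s_i ≥ γ/r₀^{1/p} and s'_i = 0 otherwise. Then for every v ∈ ℝ^t: (Σ_i (s_i·|⟨u_i, v⟩|)^p)^{1/p} − γ·‖v‖₂ ≤ (Σ_i (s'_i·|⟨u_i, v⟩|)^p)^{1/p} ≤ (Σ_i (s_i·|⟨u_i, v⟩|)^p)^{1/p}. -/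
/-- Discarding sparsification weights of magnitude smaller than `γ/r₀^{1/p}` changes
the weighted `ℓ_p` norm of any vector in the row space by at most an additive
`γ‖v‖₂`, provided the rows have Euclidean norm at most `1` and at most `r₀` of the
weights are nonzero. -/
theorem discard_small_weights (d t : ℕ) (p : ℝ) (hp : 1 ≤ p)
    (γ : ℝ) (hγ₀ : 0 < γ) (hγ₁ : γ < 1)
    (u : Fin d → Fin t → ℝ) (hu : ∀ i, Real.sqrt (∑ j, (u i j) ^ 2) ≤ 1)
    (s : Fin d → ℝ) (hs : ∀ i, 0 ≤ s i)
    (r₀ : ℕ) (hr₀ : 1 ≤ r₀)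
    (hcard : (Finset.univ.filter (fun i => s i ≠ 0)).card ≤ r₀)
    (s' : Fin d → ℝ)
    (hs' : ∀ i, s' i = if γ / (r₀ : ℝ) ^ (1 / p) ≤ s i then s i else 0) :
    ∀ v : Fin t → ℝ,
      (∑ i, (s i * |∑ j, u i j * v j|) ^ p) ^ (1 / p)
          - γ * Real.sqrt (∑ j, (v j) ^ 2) ≤
        (∑ i, (s' i * |∑ j, u i j * v j|) ^ p) ^ (1 / p) ∧
      (∑ i, (s' i * |∑ j, u i j * v j|) ^ p) ^ (1 / p) ≤
        (∑ i, (s i * |∑ j, u i j * v j|) ^ p) ^ (1 / p) := by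
  intro v
  have hp0 : 0 < p := lt_of_lt_of_le one_pos hp
  have hp0' : p ≠ 0 := ne_of_gt hp0
  set V : ℝ := Real.sqrt (∑ j, (v j) ^ 2) with hVdef
  have hV0 : 0 ≤ V := Real.sqrt_nonneg _
  set w : Fin d → ℝ := fun i => |∑ j, u i j * v j| with hwdef
  have hw0 : ∀ i, 0 ≤ w i := fun i => abs_nonneg _
  -- Cauchy-Schwarz
  have hwV : ∀ i, w i ≤ V := by
    intro i
    have hcs := Finset.sum_mul_sq_le_sq_mul_sq Finset.univ (u i) v
    have h1 : w i = Real.sqrt ((∑ j, u i j * v j) ^ 2) := (Real.sqrt_sq_eq_abs _).symm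
    rw [h1]
    calc Real.sqrt ((∑ j, u i j * v j) ^ 2)
        ≤ Real.sqrt ((∑ j, (u i j) ^ 2) * ∑ j, (v j) ^ 2) := Real.sqrt_le_sqrt hcs
      _ = Real.sqrt (∑ j, (u i j) ^ 2) * V := Real.sqrt_mul (by positivity) _
      _ ≤ 1 * V := mul_le_mul_of_nonneg_right (hu i) hV0
      _ = V := one_mul V
  have hs'le : ∀ i, s' i ≤ s i := by
    intro i; rw [hs' i]; split <;> simp [hs i]
  have hs'0 : ∀ i, 0 ≤ s' i := by
    intro i; rw [hs' i]; split <;> simp [hs i]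
  have hr₀pos : (0:ℝ) < (r₀ : ℝ) := by exact_mod_cast Nat.lt_of_lt_of_le Nat.zero_lt_one hr₀
  have hR0 : (0:ℝ) < (r₀ : ℝ) ^ (1 / p) := Real.rpow_pos_of_pos hr₀pos _
  -- upper bound
  have hupper : (∑ i, (s' i * w i) ^ p) ^ (1 / p) ≤ (∑ i, (s i * w i) ^ p) ^ (1 / p) := by
    apply Real.rpow_le_rpow
      (Finset.sum_nonneg fun i _ => Real.rpow_nonneg (mul_nonneg (hs'0 i) (hw0 i)) p)
    · apply Finset.sum_le_sum
      intro i _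
      exact Real.rpow_le_rpow (mul_nonneg (hs'0 i) (hw0 i))
        (mul_le_mul_of_nonneg_right (hs'le i) (hw0 i)) (le_of_lt hp0)
    · positivity
  -- the discarded part
  set c : Fin d → ℝ := fun i => (s i - s' i) * w i with hcdef
  have hc0 : ∀ i, 0 ≤ c i := fun i => mul_nonneg (sub_nonneg.2 (hs'le i)) (hw0 i)
  have hcbound : ∀ i, c i ≤ γ / (r₀ : ℝ) ^ (1 / p) * V := by
    intro i
    by_cases h : γ / (r₀ : ℝ) ^ (1 / p) ≤ s i
    · have hc : c i = 0 := by simp only [hcdef, hs' i, if_pos h]; ring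
      rw [hc]; positivity
    · have hsi : s i ≤ γ / (r₀ : ℝ) ^ (1 / p) := le_of_lt (not_le.1 h)
      have hc : c i = s i * w i := by simp only [hcdef, hs' i, if_neg h]; ring
      rw [hc]
      exact mul_le_mul hsi (hwV i) (hw0 i) (by positivity)
  have hczero : ∀ i, s i = 0 → c i = 0 := by
    intro i h
    have h' : s' i = 0 := by
      rw [hs' i, h, if_neg]
      intro hle
      have := div_pos hγ₀ hR0
      linarith
    simp [hcdef, h, h']
  have hcsum : (∑ i, c i ^ p) ^ (1 / p) ≤ γ * V := by
    have h1 : ∑ i, c i ^ p ≤ (r₀ : ℝ) * (γ / (r₀ : ℝ) ^ (1 / p) * V) ^ p := by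
      have heq : ∑ i, c i ^ p
          = ∑ i ∈ Finset.univ.filter (fun i => s i ≠ 0), c i ^ p := by
        symm
        apply Finset.sum_filter_of_ne
        intro i _ hne h0
        apply hne
        rw [hczero i h0, Real.zero_rpow hp0']
      rw [heq]
      calc ∑ i ∈ Finset.univ.filter (fun i => s i ≠ 0), c i ^ p
          ≤ ∑ _i ∈ Finset.univ.filter (fun i => s i ≠ 0),
              (γ / (r₀ : ℝ) ^ (1 / p) * V) ^ p := by
            apply Finset.sum_le_sum
            intro i _
            exact Real.rpow_le_rpow (hc0 i) (hcbound i) (le_of_lt hp0)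
        _ = ((Finset.univ.filter (fun i => s i ≠ 0)).card : ℝ)
              * (γ / (r₀ : ℝ) ^ (1 / p) * V) ^ p := by
            rw [Finset.sum_const, nsmul_eq_mul]
        _ ≤ (r₀ : ℝ) * (γ / (r₀ : ℝ) ^ (1 / p) * V) ^ p := by
            apply mul_le_mul_of_nonneg_right _ (by positivity)
            exact_mod_cast hcard
    have h2 : (r₀ : ℝ) * (γ / (r₀ : ℝ) ^ (1 / p) * V) ^ p = (γ * V) ^ p := by
      rw [Real.mul_rpow (by positivity) hV0, Real.div_rpow (le_of_lt hγ₀) (le_of_lt hR0),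
        ← Real.rpow_mul (le_of_lt hr₀pos), one_div_mul_cancel hp0', Real.rpow_one,
        Real.mul_rpow (le_of_lt hγ₀) hV0]
      field_simp
    calc (∑ i, c i ^ p) ^ (1 / p)
        ≤ ((γ * V) ^ p) ^ (1 / p) := by
          exact Real.rpow_le_rpow
            (Finset.sum_nonneg fun i _ => Real.rpow_nonneg (hc0 i) p) (h2 ▸ h1) (by positivity)
      _ = γ * V := by
          rw [one_div, Real.rpow_rpow_inv (by positivity) hp0']
  refine ⟨?_, hupper⟩
  rw [sub_le_iff_le_add]
  have hminkowski := Real.Lp_add_le Finset.univ (fun i => s' i * w i) c hp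
  have habs1 : ∀ i, |s' i * w i + c i| = s i * w i := by
    intro i
    rw [abs_of_nonneg (add_nonneg (mul_nonneg (hs'0 i) (hw0 i)) (hc0 i))]
    simp only [hcdef]; ring
  have habs2 : ∀ i, |s' i * w i| = s' i * w i := fun i => abs_of_nonneg (mul_nonneg (hs'0 i) (hw0 i))
  have habs3 : ∀ i, |c i| = c i := fun i => abs_of_nonneg (hc0 i)
  simp only [habs1, habs2, habs3] at hminkowski
  calc (∑ i, (s i * w i) ^ p) ^ (1 / p)
      ≤ (∑ i, (s' i * w i) ^ p) ^ (1 / p) + (∑ i, c i ^ p) ^ (1 / p) := hminkowski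
    _ ≤ (∑ i, (s' i * w i) ^ p) ^ (1 / p) + γ * V := by linarith
end
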